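/- Let F : ℝ^d → ℝ^d be L-Lipschitz and suppose there exists z* ∈ ℝ^d with ‖z*‖ ≤ Ω such that ⟨F(z), z − z*⟩ ≥ 0 for all z ∈ ℝ^d (the minty condition). Let 0 < e ≤ Γ, 0 < γ ≤ e/(10L), T ≥ 1. Let V̂_{−1/2}, V̂_{1/2}, …, V̂_{T−1/2} be symmetric positive definite diagonal matrices with e·I ≼ V̂_{t−1/2} ≼ Γ·I and V̂_{t+1/2} ≼ (1 + δ_{t+1})·V̂_{t−1/2} for nonnegative reals δ_1, …, δ_T. Define single-call (optimistic) iterates with z_{−1/2} = z_0: z_{t+1/2} = z_t − γ·V̂_{t−1/2}⁻¹F(z_{t−1/2}) and z_{t+1} = z_t − γ·V̂_{t−1/2}⁻¹F(z_{t+1/2}), and suppose ‖z_t‖ ≤ Ω and ‖z_{t+1/2}‖ ≤ Ω for all t. Then (1/T)·Σ_{t=0}^{T−1} ‖F(z_{t−1/2})‖² ≤ 96Γ²Ω²/(γ²T) + 48ΓL²Ω²/(eT) + (32Γ²Ω²/(γ²T))·Σ_{t=1}^{T} δ_t. -/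

import Mathlib

private lemma psd_diag_nonneg' {d : ℕ} {M : Matrix (Fin d) (Fin d) ℝ} (h : M.PosSemidef)
    (i : Fin d) : 0 ≤ M i i := by
  exact h.diag_nonneg

private lemma minty_zero' {d : ℕ} (L : ℝ) (hL : 0 < L)
    (F : EuclideanSpace ℝ (Fin d) → EuclideanSpace ℝ (Fin d))
    (hFlip : ∀ z₁ z₂, ‖F z₁ - F z₂‖ ≤ L * ‖z₁ - z₂‖)
    (zstar : EuclideanSpace ℝ (Fin d))
    (hminty : ∀ z : EuclideanSpace ℝ (Fin d), 0 ≤ (inner ℝ (F z) (z - zstar) : ℝ)) :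
    F zstar = 0 := by
  by_contra hne
  have hw : 0 < ‖F zstar‖ := norm_pos_iff.mpr hne
  set w := F zstar with hwdef
  set s : ℝ := 1/(2*L) with hsdef
  have hs : 0 < s := by positivity
  set y := zstar - s • w with hydef
  have h1 : 0 ≤ (inner ℝ (F y) (y - zstar) : ℝ) := hminty _
  have h2 : y - zstar = -(s • w) := by rw [hydef]; abel
  rw [h2, inner_neg_right, inner_smul_right] at h1
  have h3 : (inner ℝ (F y) w : ℝ) ≤ 0 := by nlinarith
  have h5 : (inner ℝ w w : ℝ) = inner ℝ (w - F y) w + inner ℝ (F y) w := by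
    rw [← inner_add_left]; congr 1; abel
  have h6 : (inner ℝ (w - F y) w : ℝ) ≤ ‖w - F y‖ * ‖w‖ := real_inner_le_norm _ _
  have h7 : ‖w - F y‖ ≤ L * ‖zstar - y‖ := hFlip _ _
  have h8 : ‖zstar - y‖ = s * ‖w‖ := by
    rw [hydef]
    have : zstar - (zstar - s • w) = s • w := by abel
    rw [this, norm_smul]
    simp [abs_of_pos hs]
  have h9 : (inner ℝ w w : ℝ) = ‖w‖^2 := real_inner_self_eq_norm_sq w
  have hLs : L * s = 1/2 := by rw [hsdef]; field_simp
  have h10 : ‖w - F y‖ * ‖w‖ ≤ (L*(s*‖w‖))*‖w‖ := by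
    apply mul_le_mul_of_nonneg_right _ (norm_nonneg w)
    calc ‖w - F y‖ ≤ L * ‖zstar - y‖ := h7
    _ = L * (s * ‖w‖) := by rw [h8]
  have h11 : (L*(s*‖w‖))*‖w‖ = (1/2) * ‖w‖^2 := by
    rw [show L*(s*‖w‖) = (L*s)*‖w‖ by ring, hLs]; ring
  nlinarith [mul_pos hw hw]

private lemma coord_sq_bound' (γ ε p q x y : ℝ) (hp : 0 < p) (hq : 0 < q)
    (hpε : p ≤ ε) (hqε : q ≤ ε) :
    (-(γ * (p*x)) - γ * (q*x) + γ * (p*y))^2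
      ≤ 3*γ^2*ε * (p * x^2) + 3*γ^2*ε * (q * x^2) + 3*γ^2*ε * (p * y^2) := by
  have s0 : (-(γ * (p*x)) - γ * (q*x) + γ * (p*y))^2
      ≤ 3*γ^2*((p*x)^2 + (q*x)^2 + (p*y)^2) := by
    nlinarith [sq_nonneg (γ*(p*x) - γ*(q*x)), sq_nonneg (γ*(p*x) + γ*(p*y)),
      sq_nonneg (γ*(q*x) + γ*(p*y))]
  have s1 : (p*x)^2 ≤ ε * (p * x^2) := by
    nlinarith [mul_nonneg (mul_nonneg (sub_nonneg.mpr hpε) hp.le) (sq_nonneg x)]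
  have s2 : (q*x)^2 ≤ ε * (q * x^2) := by
    nlinarith [mul_nonneg (mul_nonneg (sub_nonneg.mpr hqε) hq.le) (sq_nonneg x)]
  have s3 : (p*y)^2 ≤ ε * (p * y^2) := by
    nlinarith [mul_nonneg (mul_nonneg (sub_nonneg.mpr hpε) hp.le) (sq_nonneg y)]
  nlinarith [sq_nonneg γ, mul_le_mul_of_nonneg_left (add_le_add (add_le_add s1 s2) s3)
    (mul_nonneg (by norm_num : (0:ℝ) ≤ 3) (sq_nonneg γ))]

set_option maxHeartbeats 8000000 in
/-- The non-convex–non-concave (minty) case of Theorem 2 (inequality (18)) for the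
single-call (optimistic) scaled extra gradient method, specialized to exact gradients,
zero momentum and deterministic preconditioner updates. Here `zh t` denotes
`z_{t−1/2}` and `Vh t` denotes `V̂_{t−1/2}`. -/
theorem single_call_scaled_extragradient_minty
    (d : ℕ) (L e Γ γ Ω : ℝ) (hL : 0 < L)
    (F : EuclideanSpace ℝ (Fin d) → EuclideanSpace ℝ (Fin d))
    (hFlip : ∀ z₁ z₂, ‖F z₁ - F z₂‖ ≤ L * ‖z₁ - z₂‖)
    (zstar : EuclideanSpace ℝ (Fin d)) (hzstarΩ : ‖zstar‖ ≤ Ω)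
    (hminty : ∀ z : EuclideanSpace ℝ (Fin d), 0 ≤ (inner ℝ (F z) (z - zstar) : ℝ))
    (he : 0 < e) (heΓ : e ≤ Γ)
    (hγ0 : 0 < γ) (hγ : γ ≤ e / (10 * L))
    (T : ℕ) (hT : 1 ≤ T)
    (Vh : ℕ → Matrix (Fin d) (Fin d) ℝ) (δ : ℕ → ℝ)
    (hVdiag : ∀ t ≤ T, (Vh t).IsDiag)
    (hVpd : ∀ t ≤ T, (Vh t).PosDef)
    (hVe : ∀ t ≤ T, (Vh t - e • (1 : Matrix (Fin d) (Fin d) ℝ)).PosSemidef)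
    (hVΓ : ∀ t ≤ T, (Γ • (1 : Matrix (Fin d) (Fin d) ℝ) - Vh t).PosSemidef)
    (hδ : ∀ t, 1 ≤ t → t ≤ T → 0 ≤ δ t)
    (hVgrow : ∀ t < T, ((1 + δ (t + 1)) • Vh t - Vh (t + 1)).PosSemidef)
    (z zh : ℕ → EuclideanSpace ℝ (Fin d))
    (hzh0 : zh 0 = z 0)
    (hzh : ∀ t < T, zh (t + 1) = z t - γ • (Matrix.toEuclideanLin (Vh t)⁻¹) (F (zh t)))
    (hz : ∀ t < T, z (t + 1) = z t - γ • (Matrix.toEuclideanLin (Vh t)⁻¹) (F (zh (t + 1))))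
    (hzb : ∀ t ≤ T, ‖z t‖ ≤ Ω) (hzhb : ∀ t ≤ T, ‖zh t‖ ≤ Ω) :
    (T : ℝ)⁻¹ * ∑ t ∈ Finset.range T, ‖F (zh t)‖ ^ 2 ≤
      96 * Γ ^ 2 * Ω ^ 2 / (γ ^ 2 * T) + 48 * Γ * L ^ 2 * Ω ^ 2 / (e * T) +
        (32 * Γ ^ 2 * Ω ^ 2 / (γ ^ 2 * T)) * ∑ t ∈ Finset.Icc 1 T, δ t := by
  have hΓ0 : (0:ℝ) < Γ := lt_of_lt_of_le he heΓ
  have hΩ0 : (0:ℝ) ≤ Ω := le_trans (norm_nonneg _) hzstarΩ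
  have hγL : γ * L ≤ e / 10 := by
    have h10 : (0:ℝ) < 10 * L := by positivity
    have h := (le_div_iff₀ h10).mp hγ
    nlinarith
  have hγLpos : 0 < γ * L := mul_pos hγ0 hL
  have hγL2 : (γ*L)^2 ≤ e^2/100 := by nlinarith
  have hγL4 : (γ*L)^4 ≤ e^4/10000 := by nlinarith [sq_nonneg (γ*L), sq_nonneg e]
  set ε : ℝ := e⁻¹ with hεdef
  have hε0 : 0 < ε := inv_pos.mpr he
  have hεe : e * ε = 1 := mul_inv_cancel₀ (ne_of_gt he)
  have hFz : F zstar = 0 := minty_zero' L hL F hFlip zstar hminty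
  set g : ℕ → EuclideanSpace ℝ (Fin d) := fun t => F (zh t) with hg
  have hgb : ∀ t ≤ T, ‖g t‖ ≤ 2 * L * Ω := by
    intro t ht
    have h1 : ‖g t‖ = ‖F (zh t) - F zstar‖ := by rw [hFz, sub_zero]
    have h2 : ‖F (zh t) - F zstar‖ ≤ L * ‖zh t - zstar‖ := hFlip _ _
    have h3 : ‖zh t - zstar‖ ≤ Ω + Ω := by
      calc ‖zh t - zstar‖ ≤ ‖zh t‖ + ‖zstar‖ := norm_sub_le _ _
      _ ≤ Ω + Ω := add_le_add (hzhb t ht) hzstarΩ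
    calc ‖g t‖ ≤ L * ‖zh t - zstar‖ := by rw [h1]; exact h2
    _ ≤ L * (Ω + Ω) := by nlinarith
    _ = 2*L*Ω := by ring
  -- coordinates of the preconditioners
  set v : ℕ → Fin d → ℝ := fun t i => Vh t i i with hvdef
  have hve : ∀ t ≤ T, ∀ i, e ≤ v t i := by
    intro t ht i
    have := psd_diag_nonneg' (hVe t ht) i
    simp only [Matrix.sub_apply, Matrix.smul_apply, Matrix.one_apply_eq, smul_eq_mul,
      mul_one] at this
    simp only [hvdef]; linarith
  have hvΓ : ∀ t ≤ T, ∀ i, v t i ≤ Γ := by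
    intro t ht i
    have := psd_diag_nonneg' (hVΓ t ht) i
    simp only [Matrix.sub_apply, Matrix.smul_apply, Matrix.one_apply_eq, smul_eq_mul,
      mul_one] at this
    simp only [hvdef]; linarith
  have hv0 : ∀ t ≤ T, ∀ i, 0 < v t i := fun t ht i => lt_of_lt_of_le he (hve t ht i)
  have hvgrow : ∀ t < T, ∀ i, v (t+1) i ≤ (1 + δ (t+1)) * v t i := by
    intro t ht i
    have := psd_diag_nonneg' (hVgrow t ht) i
    simp only [Matrix.sub_apply, Matrix.smul_apply, smul_eq_mul] at this
    simp only [hvdef]; linarith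
  -- coordinate form of the linear map
  have hlin : ∀ t ≤ T, ∀ y : EuclideanSpace ℝ (Fin d), ∀ i,
      (Matrix.toEuclideanLin (Vh t)⁻¹) y i = (v t i)⁻¹ * y i := by
    intro t ht y i
    have hdw : (Vh t).diag = v t := by funext j; rfl
    have hM : Vh t = Matrix.diagonal (v t) := by
      rw [← (hVdiag t ht).diagonal_diag, hdw]
    have hinv : (Vh t)⁻¹ = Matrix.diagonal (fun i => (v t i)⁻¹) := by
      rw [hM]
      apply Matrix.inv_eq_right_inv
      rw [Matrix.diagonal_mul_diagonal]
      rw [show (fun i => v t i * (v t i)⁻¹) = fun _ => (1:ℝ) from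
        funext fun j => mul_inv_cancel₀ (ne_of_gt (hv0 t ht j))]
      exact Matrix.diagonal_one
    rw [hinv, Matrix.toEuclideanLin_apply]
    simp [Matrix.mulVec_diagonal]
  -- coordinate updates
  have hzhc : ∀ t < T, ∀ i, zh (t+1) i = z t i - γ * ((v t i)⁻¹ * g t i) := by
    intro t ht i
    rw [hzh t ht]
    simp [hlin t ht.le, hg]
  have hzc : ∀ t < T, ∀ i, z (t+1) i = z t i - γ * ((v t i)⁻¹ * g (t+1) i) := by
    intro t ht i
    rw [hz t ht]
    simp [hlin t ht.le, hg]
  -- weighted quadratics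
  set Q : ℕ → EuclideanSpace ℝ (Fin d) → ℝ := fun t x => ∑ i, v t i * (x i)^2 with hQdef
  set R : ℕ → EuclideanSpace ℝ (Fin d) → ℝ := fun t x => ∑ i, (v t i)⁻¹ * (x i)^2 with hRdef
  have hnormsq : ∀ x : EuclideanSpace ℝ (Fin d), ‖x‖^2 = ∑ i, (x i)^2 := by
    intro x
    rw [EuclideanSpace.norm_eq, Real.sq_sqrt (Finset.sum_nonneg fun i _ => sq_nonneg _)]
    simp [Real.norm_eq_abs, sq_abs]
  have hQpos : ∀ t ≤ T, ∀ x, 0 ≤ Q t x := by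
    intro t ht x
    apply Finset.sum_nonneg
    intro i _
    exact mul_nonneg (le_of_lt (hv0 t ht i)) (sq_nonneg _)
  have hRpos : ∀ t ≤ T, ∀ x, 0 ≤ R t x := by
    intro t ht x
    apply Finset.sum_nonneg
    intro i _
    exact mul_nonneg (le_of_lt (inv_pos.mpr (hv0 t ht i))) (sq_nonneg _)
  have hQle : ∀ t ≤ T, ∀ x, Q t x ≤ Γ * ‖x‖^2 := by
    intro t ht x
    rw [hnormsq, Finset.mul_sum]
    apply Finset.sum_le_sum
    intro i _
    exact mul_le_mul_of_nonneg_right (hvΓ t ht i) (sq_nonneg _)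
  have hRe : ∀ t ≤ T, ∀ x, R t x ≤ ε * ‖x‖^2 := by
    intro t ht x
    rw [hnormsq, Finset.mul_sum]
    apply Finset.sum_le_sum
    intro i _
    apply mul_le_mul_of_nonneg_right _ (sq_nonneg _)
    exact inv_anti₀ he (hve t ht i)
  have hRΓ : ∀ t ≤ T, ∀ x, Γ⁻¹ * ‖x‖^2 ≤ R t x := by
    intro t ht x
    rw [hnormsq, Finset.mul_sum]
    apply Finset.sum_le_sum
    intro i _
    apply mul_le_mul_of_nonneg_right _ (sq_nonneg _)
    exact inv_anti₀ (hv0 t ht i) (hvΓ t ht i)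
  set a : ℕ → ℝ := fun t => γ^2 * R t (g t) with hadef
  set b : ℕ → ℝ := fun t => γ^2 * R t (g (t+1) - g t) with hbdef
  set E : ℕ → ℝ := fun t => Q t (z t - zstar) with hEdef
  have hapos : ∀ t ≤ T, 0 ≤ a t := fun t ht =>
    mul_nonneg (sq_nonneg γ) (hRpos t ht _)
  -- the key one-step identity
  have key : ∀ t < T, Q t (z (t+1) - zstar)
      + 2*γ*(inner ℝ (F (zh (t+1))) (zh (t+1) - zstar) : ℝ) = E t - a t + b t := by
    intro t ht
    have hinner : (inner ℝ (F (zh (t+1))) (zh (t+1) - zstar) : ℝ)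
        = ∑ i, g (t+1) i * (zh (t+1) i - zstar i) := by
      simp [PiLp.inner_apply, hg, mul_comm]
    rw [hinner]
    simp only [hQdef, hEdef, hadef, hbdef, hRdef, Finset.mul_sum,
      ← Finset.sum_sub_distrib, ← Finset.sum_add_distrib]
    apply Finset.sum_congr rfl
    intro i _
    have e1 : (z (t+1) - zstar) i = z (t+1) i - zstar i := by simp
    have e2 : (z t - zstar) i = z t i - zstar i := by simp
    have e3 : (g (t+1) - g t) i = g (t+1) i - g t i := by simp
    rw [e1, e2, e3, hzc t ht i, hzhc t ht i]
    have hvne : v t i ≠ 0 := ne_of_gt (hv0 t ht.le i)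
    field_simp
    ring
  -- one-step inequality
  have step : ∀ t < T, E (t+1) ≤ E t - a t + b t + 4*Γ*Ω^2*δ (t+1) := by
    intro t ht
    have hm : 0 ≤ (inner ℝ (F (zh (t+1))) (zh (t+1) - zstar) : ℝ) := hminty _
    have hk := key t ht
    have h2γ : 0 ≤ 2*γ*(inner ℝ (F (zh (t+1))) (zh (t+1) - zstar) : ℝ) := by
      apply mul_nonneg _ hm; linarith
    have h1 : Q t (z (t+1) - zstar) ≤ E t - a t + b t := by linarith
    have hδ1 : 0 ≤ δ (t+1) := hδ (t+1) (by omega) (by omega)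
    have hxb : ‖z (t+1) - zstar‖ ≤ 2*Ω := by
      calc ‖z (t+1) - zstar‖ ≤ ‖z (t+1)‖ + ‖zstar‖ := norm_sub_le _ _
      _ ≤ Ω + Ω := add_le_add (hzb (t+1) (by omega)) hzstarΩ
      _ = 2*Ω := by ring
    have h2 : E (t+1) ≤ (1 + δ (t+1)) * Q t (z (t+1) - zstar) := by
      simp only [hEdef, hQdef, Finset.mul_sum]
      apply Finset.sum_le_sum
      intro i _
      have hx := sq_nonneg ((z (t+1) - zstar) i)
      have h := mul_le_mul_of_nonneg_right (hvgrow t ht i) hx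
      calc v (t+1) i * ((z (t+1) - zstar) i)^2
          ≤ ((1 + δ (t+1)) * v t i) * ((z (t+1) - zstar) i)^2 := h
      _ = (1 + δ (t+1)) * (v t i * ((z (t+1) - zstar) i)^2) := by ring
    have hsq : ‖z (t+1) - zstar‖^2 ≤ 4*Ω^2 := by
      nlinarith [norm_nonneg (z (t+1) - zstar)]
    have h3' : Γ * ‖z (t+1) - zstar‖^2 ≤ Γ * (4*Ω^2) :=
      mul_le_mul_of_nonneg_left hsq (le_of_lt hΓ0)
    have h3 : Q t (z (t+1) - zstar) ≤ 4*Γ*Ω^2 := by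
      have := hQle t ht.le (z (t+1) - zstar)
      linarith
    have h4 : 0 ≤ Q t (z (t+1) - zstar) := hQpos t ht.le _
    nlinarith [mul_le_mul_of_nonneg_left h3 hδ1]
  -- bound on b
  have hbb : ∀ t < T, b t ≤ (6/100)*a t + (3/100)*a (t-1)
      + (12/10000)*Γ*Ω^2*(if t = 0 then 0 else δ t) := by
    intro t ht
    have hΔ : ‖g (t+1) - g t‖ ≤ L * ‖zh (t+1) - zh t‖ := hFlip _ _
    have hb1 : b t ≤ γ^2*L^2*ε * ‖zh (t+1) - zh t‖^2 := by
      have h1 : R t (g (t+1) - g t) ≤ ε * ‖g (t+1) - g t‖^2 := hRe t ht.le _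
      have h2 : ‖g (t+1) - g t‖^2 ≤ L^2 * ‖zh (t+1) - zh t‖^2 := by
        nlinarith [norm_nonneg (g (t+1) - g t), norm_nonneg (zh (t+1) - zh t)]
      simp only [hbdef]
      nlinarith [sq_nonneg γ, mul_le_mul_of_nonneg_left h2 (le_of_lt hε0)]
    have m1 : γ^2*L^2*ε^2 ≤ 1/100 := by nlinarith [sq_nonneg ε, sq_nonneg (e*ε)]
    rcases Nat.eq_zero_or_pos t with rfl | htpos
    · -- t = 0
      simp only [if_pos rfl, ite_true, if_true, mul_zero, Nat.zero_sub, add_zero]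
      have hc : ∀ i, zh 1 i - zh 0 i = -(γ * ((v 0 i)⁻¹ * g 0 i)) := by
        intro i
        have h1 := hzhc 0 ht i
        rw [hzh0]
        rw [h1]; ring
      have hn : ‖zh 1 - zh 0‖^2 ≤ γ^2 * (ε * R 0 (g 0)) := by
        rw [hnormsq]
        simp only [hRdef, Finset.mul_sum]
        apply Finset.sum_le_sum
        intro i _
        have e1 : (zh 1 - zh 0) i = zh 1 i - zh 0 i := by simp
        rw [e1, hc i]
        have hvp : 0 < (v 0 i)⁻¹ := inv_pos.mpr (hv0 0 (by omega) i)
        have hvε : (v 0 i)⁻¹ ≤ ε := inv_anti₀ he (hve 0 (by omega) i)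
        nlinarith [sq_nonneg (g 0 i), sq_nonneg ((v 0 i)⁻¹ * g 0 i)]
      have ha0 : 0 ≤ a 0 := hapos 0 (by omega)
      have hR0 : 0 ≤ R 0 (g 0) := hRpos 0 (by omega) _
      have : b 0 ≤ γ^2*L^2*ε * (γ^2 * (ε * R 0 (g 0))) := by
        calc b 0 ≤ γ^2*L^2*ε * ‖zh 1 - zh 0‖^2 := hb1
        _ ≤ γ^2*L^2*ε * (γ^2 * (ε * R 0 (g 0))) := by
            apply mul_le_mul_of_nonneg_left hn; positivity
      have heq : γ^2*L^2*ε * (γ^2 * (ε * R 0 (g 0))) = (γ^2*L^2*ε^2) * (γ^2 * R 0 (g 0)) := by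
        ring
      simp only [hadef]
      nlinarith [mul_le_mul_of_nonneg_right m1 (mul_nonneg (sq_nonneg γ) hR0)]
    · -- t ≥ 1
      obtain ⟨s, rfl⟩ : ∃ s, t = s + 1 := ⟨t-1, by omega⟩
      have hsT : s < T := by omega
      simp only [if_neg (Nat.succ_ne_zero s), Nat.add_sub_cancel]
      have hcoord : ∀ i, zh (s+2) i - zh (s+1) i
          = -(γ * ((v s i)⁻¹ * g (s+1) i)) - γ * ((v (s+1) i)⁻¹ * g (s+1) i)
            + γ * ((v s i)⁻¹ * g s i) := by
        intro i
        have h1 := hzhc (s+1) ht i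
        have h2 := hzhc s hsT i
        have h3 := hzc s hsT i
        rw [show s + 2 = (s+1)+1 from rfl, h1, h3, h2]; ring
      have hnn : ‖zh (s+2) - zh (s+1)‖^2
          ≤ 3*γ^2*ε * (R s (g (s+1)) + R (s+1) (g (s+1)) + R s (g s)) := by
        have hterm : ∀ i : Fin d, ((zh (s+2) - zh (s+1)) i)^2
            ≤ 3*γ^2*ε * ((v s i)⁻¹ * (g (s+1) i)^2)
              + 3*γ^2*ε * ((v (s+1) i)⁻¹ * (g (s+1) i)^2)
              + 3*γ^2*ε * ((v s i)⁻¹ * (g s i)^2) := by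
          intro i
          have e1 : (zh (s+2) - zh (s+1)) i = zh (s+2) i - zh (s+1) i := by simp
          rw [e1, hcoord i]
          have hp : 0 < (v s i)⁻¹ := inv_pos.mpr (hv0 s hsT.le i)
          have hq : 0 < (v (s+1) i)⁻¹ := inv_pos.mpr (hv0 (s+1) ht.le i)
          have hpε : (v s i)⁻¹ ≤ ε := inv_anti₀ he (hve s hsT.le i)
          have hqε : (v (s+1) i)⁻¹ ≤ ε := inv_anti₀ he (hve (s+1) ht.le i)
          exact coord_sq_bound' γ ε _ _ _ _ hp hq hpε hqε
        calc ‖zh (s+2) - zh (s+1)‖^2 = ∑ i, ((zh (s+2) - zh (s+1)) i)^2 := hnormsq _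
        _ ≤ ∑ i : Fin d, (3*γ^2*ε * ((v s i)⁻¹ * (g (s+1) i)^2)
              + 3*γ^2*ε * ((v (s+1) i)⁻¹ * (g (s+1) i)^2)
              + 3*γ^2*ε * ((v s i)⁻¹ * (g s i)^2)) :=
            Finset.sum_le_sum (fun i _ => hterm i)
        _ = 3*γ^2*ε * (R s (g (s+1)) + R (s+1) (g (s+1)) + R s (g s)) := by
            simp only [hRdef]
            rw [Finset.sum_add_distrib, Finset.sum_add_distrib, ← Finset.mul_sum,
              ← Finset.mul_sum, ← Finset.mul_sum]
            ring
      have hδs : 0 ≤ δ (s+1) := hδ (s+1) (by omega) (by omega)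
      have hRshift : R s (g (s+1)) ≤ (1 + δ (s+1)) * R (s+1) (g (s+1)) := by
        simp only [hRdef, Finset.mul_sum]
        apply Finset.sum_le_sum
        intro i _
        have hA := hv0 s hsT.le i
        have hB := hv0 (s+1) ht.le i
        have hgrowi := hvgrow s hsT i
        have h1 : (1:ℝ)/(v s i) ≤ (1 + δ (s+1))/(v (s+1) i) := by
          rw [div_le_div_iff₀ hA hB]; nlinarith
        have h2 : (v s i)⁻¹ ≤ (1 + δ (s+1)) * (v (s+1) i)⁻¹ := by
          rw [← one_div, show (1 + δ (s+1)) * (v (s+1) i)⁻¹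
            = (1 + δ (s+1))/(v (s+1) i) from (div_eq_mul_inv _ _).symm]
          exact h1
        calc (v s i)⁻¹ * (g (s+1) i)^2
            ≤ ((1 + δ (s+1)) * (v (s+1) i)⁻¹) * (g (s+1) i)^2 :=
              mul_le_mul_of_nonneg_right h2 (sq_nonneg _)
        _ = (1 + δ (s+1)) * ((v (s+1) i)⁻¹ * (g (s+1) i)^2) := by ring
      have hRtop : R (s+1) (g (s+1)) ≤ ε * (2*L*Ω)^2 := by
        have h1 := hRe (s+1) ht.le (g (s+1))
        have h2 : ‖g (s+1)‖^2 ≤ (2*L*Ω)^2 := by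
          nlinarith [hgb (s+1) ht.le, norm_nonneg (g (s+1))]
        linarith [mul_le_mul_of_nonneg_left h2 (le_of_lt hε0)]
      have hR1 : 0 ≤ R (s+1) (g (s+1)) := hRpos (s+1) ht.le _
      have hR0 : 0 ≤ R s (g s) := hRpos s hsT.le _
      have m2 : γ^4*L^4*ε^3 ≤ e/10000 := by
        have h1 : (γ*L)^4 * ε^3 ≤ (e^4/10000) * ε^3 := by
          apply mul_le_mul_of_nonneg_right hγL4 (by positivity)
        have h2 : (e^4/10000) * ε^3 = (e/10000) * (e*ε)^3 := by ring
        have h3 : (e*ε)^3 = 1 := by rw [hεe]; ring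
        nlinarith [h1]
      -- combine
      have k2 : ‖zh (s+2) - zh (s+1)‖^2
          ≤ 3*γ^2*ε * (2*R (s+1) (g (s+1)) + R s (g s) + δ (s+1) * (ε * (2*L*Ω)^2)) := by
        have hd : δ (s+1) * R (s+1) (g (s+1)) ≤ δ (s+1) * (ε * (2*L*Ω)^2) :=
          mul_le_mul_of_nonneg_left hRtop hδs
        have hbr : R s (g (s+1)) + R (s+1) (g (s+1)) + R s (g s)
            ≤ 2*R (s+1) (g (s+1)) + R s (g s) + δ (s+1) * (ε * (2*L*Ω)^2) := by
          linarith [hRshift]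
        calc ‖zh (s+2) - zh (s+1)‖^2
            ≤ 3*γ^2*ε * (R s (g (s+1)) + R (s+1) (g (s+1)) + R s (g s)) := hnn
        _ ≤ _ := by apply mul_le_mul_of_nonneg_left hbr; positivity
      have k3 : b (s+1) ≤ γ^2*L^2*ε * (3*γ^2*ε
          * (2*R (s+1) (g (s+1)) + R s (g s) + δ (s+1) * (ε * (2*L*Ω)^2))) := by
        calc b (s+1) ≤ γ^2*L^2*ε * ‖zh (s+2) - zh (s+1)‖^2 := hb1
        _ ≤ _ := by apply mul_le_mul_of_nonneg_left k2; positivity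
      have k4 : γ^2*L^2*ε * (3*γ^2*ε
          * (2*R (s+1) (g (s+1)) + R s (g s) + δ (s+1) * (ε * (2*L*Ω)^2)))
          = 6*(γ^2*L^2*ε^2)*(γ^2 * R (s+1) (g (s+1)))
            + 3*(γ^2*L^2*ε^2)*(γ^2 * R s (g s))
            + 12*(γ^4*L^4*ε^3)*(δ (s+1) * Ω^2) := by ring
      simp only [hadef]
      have x1 : 6*(γ^2*L^2*ε^2)*(γ^2 * R (s+1) (g (s+1)))
          ≤ (6/100)*(γ^2 * R (s+1) (g (s+1))) := by
        nlinarith [mul_le_mul_of_nonneg_right m1 (mul_nonneg (sq_nonneg γ) hR1)]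
      have x2 : 3*(γ^2*L^2*ε^2)*(γ^2 * R s (g s)) ≤ (3/100)*(γ^2 * R s (g s)) := by
        nlinarith [mul_le_mul_of_nonneg_right m1 (mul_nonneg (sq_nonneg γ) hR0)]
      have x3 : 12*(γ^4*L^4*ε^3)*(δ (s+1) * Ω^2) ≤ (12/10000)*Γ*Ω^2*δ (s+1) := by
        have hδΩ : 0 ≤ δ (s+1) * Ω^2 := mul_nonneg hδs (sq_nonneg Ω)
        nlinarith [mul_le_mul_of_nonneg_right m2 hδΩ,
          mul_le_mul_of_nonneg_right heΓ hδΩ]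
      linarith [k3.trans (le_of_eq k4)]
  -- summation
  have htel : ∑ t ∈ Finset.range T, (E (t+1) - E t) = E T - E 0 := Finset.sum_range_sub E T
  have hstepsum : E T - E 0 ≤ ∑ t ∈ Finset.range T, (- a t + b t + 4*Γ*Ω^2*δ (t+1)) := by
    rw [← htel]
    apply Finset.sum_le_sum
    intro t ht
    have := step t (Finset.mem_range.mp ht)
    linarith
  have hsplit : ∑ t ∈ Finset.range T, (- a t + b t + 4*Γ*Ω^2*δ (t+1))
      = - ∑ t ∈ Finset.range T, a t + ∑ t ∈ Finset.range T, b t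
        + 4*Γ*Ω^2 * ∑ t ∈ Finset.range T, δ (t+1) := by
    simp only [Finset.sum_add_distrib, Finset.sum_neg_distrib, Finset.mul_sum]
  have hIcc : ∑ t ∈ Finset.range T, δ (t+1) = ∑ t ∈ Finset.Icc 1 T, δ t := by
    rw [Finset.range_eq_Ico, Finset.sum_Ico_eq_sum_range]
    rw [show Finset.Icc 1 T = Finset.Ico 1 (T+1) from rfl, Finset.sum_Ico_eq_sum_range]
    simp [add_comm]
  have hET : 0 ≤ E T := hQpos T le_rfl _
  have hE0 : E 0 ≤ 4*Γ*Ω^2 := by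
    have h1 := hQle 0 (by omega) (z 0 - zstar)
    have h2 : ‖z 0 - zstar‖ ≤ 2*Ω := by
      calc ‖z 0 - zstar‖ ≤ ‖z 0‖ + ‖zstar‖ := norm_sub_le _ _
      _ ≤ Ω + Ω := add_le_add (hzb 0 (by omega)) hzstarΩ
      _ = 2*Ω := by ring
    have hsq0 : ‖z 0 - zstar‖^2 ≤ 4*Ω^2 := by
      nlinarith [norm_nonneg (z 0 - zstar)]
    have h3' : Γ * ‖z 0 - zstar‖^2 ≤ Γ * (4*Ω^2) :=
      mul_le_mul_of_nonneg_left hsq0 (le_of_lt hΓ0)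
    simp only [hEdef]
    linarith
  set Sδ : ℝ := ∑ t ∈ Finset.Icc 1 T, δ t with hSδdef
  have hSδ0 : 0 ≤ Sδ := by
    apply Finset.sum_nonneg
    intro t htm
    obtain ⟨h1, h2⟩ := Finset.mem_Icc.mp htm
    exact hδ t h1 h2
  set Sa : ℝ := ∑ t ∈ Finset.range T, a t with hSadef
  have hSa0 : 0 ≤ Sa := Finset.sum_nonneg fun t htm =>
    hapos t (le_of_lt (Finset.mem_range.mp htm))
  -- bound on ∑ b
  have hshiftsum : ∑ t ∈ Finset.range T, a (t-1) ≤ 2 * Sa := by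
    obtain ⟨n, rfl⟩ : ∃ n, T = n + 1 := ⟨T-1, by omega⟩
    rw [Finset.sum_range_succ']
    simp only [Nat.add_sub_cancel, Nat.zero_sub]
    have h1 : ∑ t ∈ Finset.range n, a t ≤ Sa := by
      rw [hSadef, Finset.sum_range_succ]
      have := hapos n (by omega)
      linarith
    have h2 : a 0 ≤ Sa := by
      apply Finset.single_le_sum (f := a) _ (Finset.mem_range.mpr (by omega))
      intro t htm
      exact hapos t (le_of_lt (Finset.mem_range.mp htm))
    linarith
  have hitesum : ∑ t ∈ Finset.range T, (if t = 0 then (0:ℝ) else δ t) ≤ Sδ := by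
    obtain ⟨n, rfl⟩ : ∃ n, T = n + 1 := ⟨T-1, by omega⟩
    rw [Finset.sum_range_succ']
    norm_num
    rw [← hIcc]
    rw [Finset.sum_range_succ]
    have := hδ (n+1) (by omega) (by omega)
    linarith
  have hSb : ∑ t ∈ Finset.range T, b t ≤ (12/100)*Sa + (12/10000)*Γ*Ω^2*Sδ := by
    have h1 : ∑ t ∈ Finset.range T, b t
        ≤ ∑ t ∈ Finset.range T, ((6/100)*a t + (3/100)*a (t-1)
          + (12/10000)*Γ*Ω^2*(if t = 0 then 0 else δ t)) := by
      apply Finset.sum_le_sum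
      intro t htm
      exact hbb t (Finset.mem_range.mp htm)
    have h2 : ∑ t ∈ Finset.range T, ((6/100)*a t + (3/100)*a (t-1)
          + (12/10000)*Γ*Ω^2*(if t = 0 then 0 else δ t))
        = (6/100)*Sa + (3/100)*(∑ t ∈ Finset.range T, a (t-1))
          + (12/10000)*Γ*Ω^2*(∑ t ∈ Finset.range T, (if t = 0 then (0:ℝ) else δ t)) := by
      simp only [Finset.sum_add_distrib, ← Finset.mul_sum, hSadef]
    have h3 : (0:ℝ) ≤ (12/10000)*Γ*Ω^2 := by positivity
    have h4 := mul_le_mul_of_nonneg_left hitesum h3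
    nlinarith [hshiftsum]
  -- main bound on Sa
  have hSamain : Sa ≤ (100/88) * (4*Γ*Ω^2 + (40012/10000)*Γ*Ω^2*Sδ) := by
    have h0 : Sa ≤ E 0 + ∑ t ∈ Finset.range T, b t + 4*Γ*Ω^2*Sδ := by
      rw [← hIcc]
      linarith [hstepsum, hsplit, hET]
    linarith [hSb, hE0]
  -- from Sa to the gradient sum
  have hSg : ∑ t ∈ Finset.range T, ‖F (zh t)‖^2 ≤ Γ * Sa / γ^2 := by
    have h1 : ∀ t ∈ Finset.range T, ‖F (zh t)‖^2 ≤ Γ * R t (g t) := by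
      intro t htm
      have ht := le_of_lt (Finset.mem_range.mp htm)
      have h2 := hRΓ t ht (g t)
      have h3 : ‖F (zh t)‖ = ‖g t‖ := by rw [hg]
      rw [h3]
      have hΓne : Γ ≠ 0 := ne_of_gt hΓ0
      calc ‖g t‖^2 = Γ * (Γ⁻¹ * ‖g t‖^2) := by field_simp
      _ ≤ Γ * R t (g t) := mul_le_mul_of_nonneg_left h2 (le_of_lt hΓ0)
    calc ∑ t ∈ Finset.range T, ‖F (zh t)‖^2 ≤ ∑ t ∈ Finset.range T, Γ * R t (g t) :=
      Finset.sum_le_sum h1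
    _ = Γ * Sa / γ^2 := by
        have hγ2ne : γ^2 ≠ 0 := pow_ne_zero 2 (ne_of_gt hγ0)
        rw [hSadef, Finset.mul_sum, Finset.sum_div]
        apply Finset.sum_congr rfl
        intro t _
        simp only [hadef]
        field_simp
  have hmain : ∑ t ∈ Finset.range T, ‖F (zh t)‖^2
      ≤ 96*Γ^2*Ω^2/γ^2 + (32*Γ^2*Ω^2/γ^2)*Sδ := by
    have h1 : Γ * Sa ≤ Γ * ((100/88) * (4*Γ*Ω^2 + (40012/10000)*Γ*Ω^2*Sδ)) :=
      mul_le_mul_of_nonneg_left hSamain (le_of_lt hΓ0)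
    have h2 : Γ * ((100/88) * (4*Γ*Ω^2 + (40012/10000)*Γ*Ω^2*Sδ))
        ≤ 96*Γ^2*Ω^2 + 32*Γ^2*Ω^2*Sδ := by
      nlinarith [mul_nonneg (mul_nonneg (sq_nonneg Γ) (sq_nonneg Ω)) hSδ0,
        mul_nonneg (sq_nonneg Γ) (sq_nonneg Ω)]
    have h3 : Γ * Sa / γ^2 ≤ (96*Γ^2*Ω^2 + 32*Γ^2*Ω^2*Sδ) / γ^2 := by
      apply div_le_div_of_nonneg_right _ (by positivity)
      linarith
    calc ∑ t ∈ Finset.range T, ‖F (zh t)‖^2 ≤ Γ * Sa / γ^2 := hSg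
    _ ≤ (96*Γ^2*Ω^2 + 32*Γ^2*Ω^2*Sδ) / γ^2 := h3
    _ = 96*Γ^2*Ω^2/γ^2 + (32*Γ^2*Ω^2/γ^2)*Sδ := by ring
  -- final
  have hτ : (0:ℝ) < (T:ℝ) := by exact_mod_cast Nat.pos_of_ne_zero (by omega)
  have hτinv : (0:ℝ) ≤ (T:ℝ)⁻¹ := le_of_lt (inv_pos.mpr hτ)
  have hτne : (T:ℝ) ≠ 0 := ne_of_gt hτ
  have hγne : γ ≠ 0 := ne_of_gt hγ0
  have hmid : (0:ℝ) ≤ 48 * Γ * L ^ 2 * Ω ^ 2 / (e * T) := by positivity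
  have hfinal : (T:ℝ)⁻¹ * ∑ t ∈ Finset.range T, ‖F (zh t)‖^2
      ≤ (T:ℝ)⁻¹ * (96*Γ^2*Ω^2/γ^2 + (32*Γ^2*Ω^2/γ^2)*Sδ) :=
    mul_le_mul_of_nonneg_left hmain hτinv
  have key1 : ∀ A : ℝ, A/(γ^2*(T:ℝ)) = (T:ℝ)⁻¹ * (A/γ^2) := by
    intro A
    rw [← div_div, div_eq_mul_inv (A/γ^2), mul_comm]
  have heq2 : (T:ℝ)⁻¹ * (96*Γ^2*Ω^2/γ^2 + (32*Γ^2*Ω^2/γ^2)*Sδ)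
      = 96 * Γ ^ 2 * Ω ^ 2 / (γ ^ 2 * T) + (32 * Γ ^ 2 * Ω ^ 2 / (γ ^ 2 * T)) * Sδ := by
    rw [key1 (96 * Γ ^ 2 * Ω ^ 2), key1 (32 * Γ ^ 2 * Ω ^ 2)]
    ring
  rw [hSδdef] at hfinal heq2
  linarith [hfinal, heq2.le, hmid]
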